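/- Let $m \geq 4$ be even and $k \geq 1$. For every $(\xi,\eta) \in \mathbb{R}^k \times \mathbb{R}^k$ with $(\xi,\eta) \neq (0,0)$, the Hessian matrix of $\phi(\xi,\eta) = |\xi|^m - |\eta|^m$ at $(\xi,\eta)$ has rank at least $k$. -/

import Mathlib

/-!
Away from the origin the Hessian of `ξ ↦ ‖ξ‖^m` is `a • 1 + b • ξξᵀ` with `a > 0` and `b ≥ 0`,
hence positive definite. Since `(ξ, η) ≠ (0, 0)`, one of the two diagonal blocks is invertible,
and the rank of a block matrix is at least that of each of its blocks.
-/

/-- The Hessian matrix `m‖ξ‖^{m-2} I_k + m(m-2)‖ξ‖^{m-4} ξξᵀ` of `ξ ↦ ‖ξ‖^m`. -/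
noncomputable def hessPow (k m : ℕ) (ξ : EuclideanSpace ℝ (Fin k)) :
    Matrix (Fin k) (Fin k) ℝ :=
  ((m : ℝ) * ‖ξ‖ ^ (m - 2)) • (1 : Matrix (Fin k) (Fin k) ℝ)
    + ((m : ℝ) * ((m : ℝ) - 2) * ‖ξ‖ ^ (m - 4)) •
        Matrix.vecMulVec (fun i => ξ i) (fun i => ξ i)

open Matrix

section BlockRank

variable {R : Type*} [CommRing R] [StrongRankCondition R]
  {l m n o : Type*} [Fintype n] [Fintype o]

theorem Matrix.rank_le_rank_fromBlocks_left (A : Matrix m n R) (B : Matrix m o R)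
    (C : Matrix l n R) (D : Matrix l o R) :
    A.rank ≤ (fromBlocks A B C D).rank :=
  (fromBlocks A B C D).rank_submatrix_le Sum.inl Sum.inl

theorem Matrix.rank_le_rank_fromBlocks_right (A : Matrix m n R) (B : Matrix m o R)
    (C : Matrix l n R) (D : Matrix l o R) :
    D.rank ≤ (fromBlocks A B C D).rank :=
  (fromBlocks A B C D).rank_submatrix_le Sum.inr Sum.inr

end BlockRank

theorem hessPow_posDef {k m : ℕ} (hm : 2 ≤ m) {ξ : EuclideanSpace ℝ (Fin k)} (hξ : ξ ≠ 0) :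
    (hessPow k m ξ).PosDef := by
  have hm' : (2 : ℝ) ≤ m := by exact_mod_cast hm
  have hnorm : 0 < ‖ξ‖ := norm_pos_iff.mpr hξ
  have ha : 0 < (m : ℝ) * ‖ξ‖ ^ (m - 2) := by positivity
  have hb : 0 ≤ (m : ℝ) * ((m : ℝ) - 2) * ‖ξ‖ ^ (m - 4) :=
    mul_nonneg (mul_nonneg (by positivity) (by linarith)) (by positivity)
  refine (PosDef.one.smul ha).add_posSemidef (PosSemidef.smul ?_ hb)
  simpa using posSemidef_vecMulVec_self_star (fun i => ξ i)

theorem stmt4_general (k m : ℕ) (hm : 4 ≤ m)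
    (ξ η : EuclideanSpace ℝ (Fin k)) (hne : (ξ, η) ≠ (0, 0)) :
    k ≤ (Matrix.fromBlocks (hessPow k m ξ) 0 0 (-(hessPow k m η))).rank := by
  have hm₂ : 2 ≤ m := by omega
  by_cases hξ : ξ = 0
  · have hη : η ≠ 0 := by rintro rfl; exact hne (by rw [hξ])
    calc k = (-(hessPow k m η)).rank := by
          simpa using (rank_of_isUnit _ (hessPow_posDef hm₂ hη).isUnit.neg).symm
      _ ≤ _ := rank_le_rank_fromBlocks_right _ _ _ _
  · calc k = (hessPow k m ξ).rank := by
          simpa using (rank_of_isUnit _ (hessPow_posDef hm₂ hξ).isUnit).symm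
      _ ≤ _ := rank_le_rank_fromBlocks_left _ _ _ _

/-- For `m ≥ 4` even, `k ≥ 1`, and `(ξ,η) ≠ (0,0)`, the (block diagonal)
Hessian of `(ξ,η) ↦ ‖ξ‖^m - ‖η‖^m` has rank at least `k`. -/
theorem stmt4 (k m : ℕ) (hk : 1 ≤ k) (hm : 4 ≤ m) (hme : Even m)
    (ξ η : EuclideanSpace ℝ (Fin k)) (hne : (ξ, η) ≠ (0, 0)) :
    k ≤ (Matrix.fromBlocks (hessPow k m ξ) 0 0 (-(hessPow k m η))).rank :=
  stmt4_general k m hm ξ η hne
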